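/- arXiv:2003.14215 — 3 statements merged into one kernel-verified Lean document; each statement's English description precedes it below -/
import Mathlib

section
/- Let T̄ : R̄ → R̄ be the state transition endomorphism of an explicit difference system and I the difference ideal generated by {x_i(r_i) − f_i}. Then for every polynomial f in the subalgebra R̄ of normal forms, and every t ≥ 0, T̄^t(f) = NF_I(σ^t(f)). In particular T̄^t(x_i(0)) = NF_I(x_i(t)). -/
theorem stmt8 (K : Type*) [Field K] (n : ℕ) (r : Fin n → ℕ) (hr : ∀ i, 0 < r i)
    (f : Fin n → MvPolynomial (Fin n × ℕ) K)
    (hf : ∀ i : Fin n, ∀ p ∈ (f i).vars, (p : Fin n × ℕ).2 < r p.1)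
    (σ : MvPolynomial (Fin n × ℕ) K →ₐ[K] MvPolynomial (Fin n × ℕ) K)
    (hσ : σ = MvPolynomial.rename (fun p : Fin n × ℕ => (p.1, p.2 + 1)))
    (Tbar : MvPolynomial (Fin n × ℕ) K →ₐ[K] MvPolynomial (Fin n × ℕ) K)
    (hT : Tbar = MvPolynomial.aeval (fun p : Fin n × ℕ =>
      if p.2 + 1 = r p.1 then f p.1 else MvPolynomial.X (p.1, p.2 + 1)))
    (I : Ideal (MvPolynomial (Fin n × ℕ) K))
    (hI : I = Ideal.span {g : MvPolynomial (Fin n × ℕ) K | ∃ i : Fin n, ∃ t : ℕ,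
      g = (fun h => MvPolynomial.rename (fun p : Fin n × ℕ => (p.1, p.2 + 1)) h)^[t]
            (MvPolynomial.X (i, r i) - f i)}) :
    (∀ g : MvPolynomial (Fin n × ℕ) K, (∀ p ∈ g.vars, (p : Fin n × ℕ).2 < r p.1) →
      ∀ t : ℕ, (fun h => σ h)^[t] g - (fun h => Tbar h)^[t] g ∈ I) ∧
    (∀ i : Fin n, ∀ t : ℕ,
      MvPolynomial.X (i, t) - (fun h => Tbar h)^[t] (MvPolynomial.X (i, 0)) ∈ I) := by
  subst hσ hT hI
  set u : Fin n × ℕ → Fin n × ℕ := fun p => (p.1, p.2 + 1) with hu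
  set S : Set (MvPolynomial (Fin n × ℕ) K) :=
    {g | ∃ i : Fin n, ∃ t : ℕ,
      g = (fun h => MvPolynomial.rename u h)^[t] (MvPolynomial.X (i, r i) - f i)} with hS
  -- σ maps the ideal into itself
  have hσI : ∀ x ∈ Ideal.span S, MvPolynomial.rename u x ∈ Ideal.span S := by
    intro x hx
    induction hx using Submodule.span_induction with
    | mem y hy =>
        obtain ⟨i, t, rfl⟩ := hy
        apply Ideal.subset_span
        exact ⟨i, t + 1, (Function.iterate_succ_apply' _ t _).symm⟩
    | zero => simp
    | add y z _ _ hy hz => rw [map_add]; exact Ideal.add_mem _ hy hz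
    | smul a y _ hy =>
        rw [smul_eq_mul, map_mul]
        exact Ideal.mul_mem_left _ _ hy
  set T : MvPolynomial (Fin n × ℕ) K →ₐ[K] MvPolynomial (Fin n × ℕ) K :=
    MvPolynomial.aeval (fun p : Fin n × ℕ =>
      if p.2 + 1 = r p.1 then f p.1 else MvPolynomial.X (p.1, p.2 + 1)) with hTdef
  -- σ and T agree on variables modulo the ideal
  have hXdiff : ∀ p : Fin n × ℕ,
      MvPolynomial.rename u (MvPolynomial.X p) - T (MvPolynomial.X p) ∈ Ideal.span S := by
    intro p
    rw [hTdef, MvPolynomial.rename_X, MvPolynomial.aeval_X]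
    by_cases h : p.2 + 1 = r p.1
    · rw [if_pos h]
      apply Ideal.subset_span
      refine ⟨p.1, 0, ?_⟩
      simp [hu, h]
    · rw [if_neg h]
      simp [hu]
  -- hence σ h - T h ∈ I for every h
  have hdiff : ∀ h : MvPolynomial (Fin n × ℕ) K,
      MvPolynomial.rename u h - T h ∈ Ideal.span S := by
    intro h
    induction h using MvPolynomial.induction_on with
    | C a => simp [MvPolynomial.rename_C]
    | add p q hp hq =>
        have : MvPolynomial.rename u (p + q) - T (p + q)
            = (MvPolynomial.rename u p - T p) + (MvPolynomial.rename u q - T q) := by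
          rw [map_add, map_add]; ring
        rw [this]; exact Ideal.add_mem _ hp hq
    | mul_X p i hp =>
        have : MvPolynomial.rename u (p * MvPolynomial.X i) - T (p * MvPolynomial.X i)
            = (MvPolynomial.rename u p - T p) * MvPolynomial.rename u (MvPolynomial.X i)
              + T p * (MvPolynomial.rename u (MvPolynomial.X i) - T (MvPolynomial.X i)) := by
          rw [map_mul, map_mul]; ring
        rw [this]
        exact Ideal.add_mem _ (Ideal.mul_mem_right _ _ hp)
          (Ideal.mul_mem_left _ _ (hXdiff i))
  -- key induction on t
  have key : ∀ t : ℕ, ∀ g : MvPolynomial (Fin n × ℕ) K,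
      (fun h => MvPolynomial.rename u h)^[t] g - (fun h => T h)^[t] g ∈ Ideal.span S := by
    intro t
    induction t with
    | zero => intro g; simp
    | succ t ih =>
        intro g
        rw [Function.iterate_succ_apply', Function.iterate_succ_apply']
        have e : MvPolynomial.rename u ((fun h => MvPolynomial.rename u h)^[t] g)
              - T ((fun h => T h)^[t] g)
            = MvPolynomial.rename u
                ((fun h => MvPolynomial.rename u h)^[t] g - (fun h => T h)^[t] g)
              + (MvPolynomial.rename u ((fun h => T h)^[t] g) - T ((fun h => T h)^[t] g)) := by
          rw [map_sub]; ring
        rw [e]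
        exact Ideal.add_mem _ (hσI _ (ih g)) (hdiff _)
  -- σ^t X(i,0) = X(i,t)
  have hXt : ∀ (t : ℕ) (i : Fin n),
      (fun h => MvPolynomial.rename u h)^[t]
        ((MvPolynomial.X (i, 0) : MvPolynomial (Fin n × ℕ) K))
        = MvPolynomial.X (i, t) := by
    intro t i
    induction t with
    | zero => simp
    | succ t ih =>
        rw [Function.iterate_succ_apply', ih, MvPolynomial.rename_X]
  refine ⟨fun g _ t => key t g, fun i t => ?_⟩
  have := key t (MvPolynomial.X (i, 0))
  rwa [hXt t i] at this
end

section
/- Suppose in an explicit difference system each defining polynomial has the form f_i = x_{k_i}(0) + g_i, where i ↦ k_i is a permutation of {1,…,n} and g_i involves no variables x_j(0). Then the state transition map T : K^r → K^r is bijective. -/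
lemma eval_congr_on_vars {σ K : Type*} [CommSemiring K] (p : MvPolynomial σ K)
    (a b : σ → K) (h : ∀ i ∈ p.vars, a i = b i) :
    MvPolynomial.eval a p = MvPolynomial.eval b p := by
  apply MvPolynomial.eval₂_congr
  intro i c hic hc
  exact h i ((MvPolynomial.mem_vars i).mpr ⟨c, MvPolynomial.mem_support_iff.mpr hc, hic⟩)

theorem stmt9 (K : Type*) [Field K] (n : ℕ) (r : Fin n → ℕ) (hr : ∀ i, 0 < r i)
    (k : Equiv.Perm (Fin n))
    (g : Fin n → MvPolynomial (Σ i : Fin n, Fin (r i)) K)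
    (hg : ∀ i j : Fin n,
      (⟨j, ⟨0, hr j⟩⟩ : Σ i : Fin n, Fin (r i)) ∉ (g i).vars)
    (f : Fin n → MvPolynomial (Σ i : Fin n, Fin (r i)) K)
    (hfdef : ∀ i : Fin n,
      f i = MvPolynomial.X ⟨k i, ⟨0, hr (k i)⟩⟩ + g i)
    (T : ((Σ i : Fin n, Fin (r i)) → K) → ((Σ i : Fin n, Fin (r i)) → K))
    (hT : ∀ (a : (Σ i : Fin n, Fin (r i)) → K) (p : Σ i : Fin n, Fin (r i)),
      T a p = if h : (p.2 : ℕ) + 1 < r p.1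
        then a ⟨p.1, ⟨(p.2 : ℕ) + 1, h⟩⟩
        else MvPolynomial.eval a (f p.1)) :
    Function.Bijective T := by
  -- shift: reconstruct nonzero coordinates from b
  set sh : ((Σ i : Fin n, Fin (r i)) → K) → ((Σ i : Fin n, Fin (r i)) → K) :=
    fun b p => if h : 0 < (p.2 : ℕ) then
        b ⟨p.1, ⟨(p.2 : ℕ) - 1, lt_of_le_of_lt (Nat.sub_le _ _) p.2.2⟩⟩
      else 0 with hsh
  set S : ((Σ i : Fin n, Fin (r i)) → K) → ((Σ i : Fin n, Fin (r i)) → K) :=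
    fun b p => if h : 0 < (p.2 : ℕ) then
        b ⟨p.1, ⟨(p.2 : ℕ) - 1, lt_of_le_of_lt (Nat.sub_le _ _) p.2.2⟩⟩
      else b ⟨k.symm p.1, ⟨r (k.symm p.1) - 1, Nat.sub_lt (hr _) one_pos⟩⟩
        - MvPolynomial.eval (sh b) (g (k.symm p.1)) with hS
  -- key: a zero-coordinate-free polynomial evaluates equally on assignments
  -- agreeing on nonzero coordinates
  have key : ∀ (i : Fin n) (a b : (Σ i : Fin n, Fin (r i)) → K),
      (∀ p : Σ i : Fin n, Fin (r i), 0 < (p.2 : ℕ) → a p = b p) →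
      MvPolynomial.eval a (g i) = MvPolynomial.eval b (g i) := by
    intro i a b hab
    apply eval_congr_on_vars
    rintro ⟨j, s⟩ hjs
    rcases Nat.eq_zero_or_pos (s : ℕ) with h0 | h0
    · exfalso
      have : s = ⟨0, hr j⟩ := Fin.ext h0
      subst this
      exact hg i j hjs
    · exact hab _ h0
  apply Function.bijective_iff_has_inverse.mpr
  refine ⟨S, ?_, ?_⟩
  · -- left inverse: S (T a) = a
    intro a
    funext ⟨j, s⟩
    have shTa : ∀ p : Σ i : Fin n, Fin (r i), 0 < (p.2 : ℕ) → sh (T a) p = a p := by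
      rintro ⟨j', s'⟩ hs'
      replace hs' : 0 < (s' : ℕ) := hs'
      have hs2 : (s' : ℕ) < r j' := s'.2
      simp only [hsh, dif_pos hs']
      rw [hT]
      have hlt : ((s' : ℕ) - 1) + 1 < r j' := by omega
      rw [dif_pos hlt]
      exact congrArg a (Sigma.ext rfl (heq_of_eq (Fin.ext (by simp; omega))))
    rcases Nat.eq_zero_or_pos (s : ℕ) with h0 | h0
    · simp only [hS, not_lt_of_ge (le_of_eq h0.symm), dif_neg (by omega : ¬ 0 < (s:ℕ))]
      rw [hT]
      have : ¬ (r (k.symm j) - 1 : ℕ) + 1 < r (k.symm j) := by omega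
      rw [dif_neg this, hfdef, map_add, MvPolynomial.eval_X,
        key (k.symm j) (sh (T a)) a shTa]
      have hj : k (k.symm j) = j := k.apply_symm_apply j
      have : a ⟨k (k.symm j), ⟨0, hr (k (k.symm j))⟩⟩ = a ⟨j, s⟩ := by
        congr 1
        refine Sigma.ext hj ?_
        rw [hj]
        exact heq_of_eq (Fin.ext h0.symm)
      rw [this]
      ring
    · simp only [hS, dif_pos h0]
      rw [hT]
      have hlt : ((s : ℕ) - 1) + 1 < r j := by omega
      rw [dif_pos hlt]
      exact congrArg a (Sigma.ext rfl (heq_of_eq (Fin.ext (by simp; omega))))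
  · -- right inverse: T (S b) = b
    intro b
    funext ⟨i, s⟩
    rw [hT]
    have hSsh : ∀ p : Σ i : Fin n, Fin (r i), 0 < (p.2 : ℕ) → S b p = sh b p := by
      rintro ⟨j', s'⟩ hs'
      simp only [hS, hsh, dif_pos hs']
    by_cases h : (s : ℕ) + 1 < r i
    · simp only [dif_pos h, hS, dif_pos (Nat.succ_pos _)]
      exact congrArg b (Sigma.ext rfl (heq_of_eq (Fin.ext (by simp))))
    · rw [dif_neg h, hfdef, map_add, MvPolynomial.eval_X,
        key i (S b) (sh b) hSsh]
      have h0 : ¬ 0 < ((⟨0, hr (k i)⟩ : Fin (r (k i))) : ℕ) := by simp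
      simp only [hS, dif_neg h0]
      have hki : k.symm (k i) = i := k.symm_apply_apply i
      have hs : (s : ℕ) = r i - 1 := by have := s.2; omega
      have : b ⟨k.symm (k i), ⟨r (k.symm (k i)) - 1, Nat.sub_lt (hr _) one_pos⟩⟩
          = b ⟨i, s⟩ := by
        congr 1
        refine Sigma.ext hki ?_
        rw [hki]
        exact heq_of_eq (Fin.ext (by simp; omega))
      rw [this, hki]
      ring
end

section
/- Let T, S : K^r → K^r be the state transition maps of an invertible explicit difference system and its inverse system respectively, and ξ : K^r → K^r the involution reversing each block of coordinates. Then ξ ∘ S = T^{−1} ∘ ξ; consequently, if v is the t-state of a solution of the original system, then ξ(S^t(ξ(v))) is its initial state. -/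
theorem stmt10 {α : Type*} (T : α ≃ α) (S ξ : α → α)
    (hinv : ∀ x, ξ (ξ x) = x)
    (hconj : ∀ x, ξ (S x) = T.symm (ξ x)) :
    ∀ v : ℕ → α, (∀ t, v (t + 1) = T (v t)) →
      ∀ t : ℕ, ξ (S^[t] (ξ (v t))) = v 0 := by
  intro v hv t
  induction t with
  | zero => simp [hinv]
  | succ t ih =>
    have hS : S (ξ (v (t + 1))) = ξ (v t) := by
      have := hconj (ξ (v (t + 1)))
      have h2 : ξ (ξ (S (ξ (v (t+1))))) = S (ξ (v (t+1))) := hinv _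
      rw [this, hinv, hv t] at h2
      rw [hv t, ← h2, Equiv.symm_apply_apply]
    rw [Function.iterate_succ_apply, hS, ih]
end
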